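/- arXiv:2505.24832 — 2 statements merged into one kernel-verified Lean document; each statement's English description precedes it below -/
import Mathlib

section
/- Super-additivity of unintended memorization: if X = (X₁,…,Xₙ) is a dataset of n samples that are conditionally i.i.d. given Θ, and Θ̂ is any random variable (the trained model), then Σᵢ I(Xᵢ; Θ̂ | Θ) ≤ I(X; Θ̂ | Θ) ≤ H(Θ̂). -/
open Finset Real

/-- Probability that random variable `X` takes value `x`, under pmf `p` on finite sample space. -/
noncomputable def prVal {Ω α : Type*} [Fintype Ω] [DecidableEq α]
    (p : Ω → ℝ) (X : Ω → α) (x : α) : ℝ :=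
  ∑ ω ∈ Finset.univ.filter (fun ω => X ω = x), p ω

/-- Shannon entropy (in bits) of random variable `X`. -/
noncomputable def entropy {Ω α : Type*} [Fintype Ω] [Fintype α] [DecidableEq α]
    (p : Ω → ℝ) (X : Ω → α) : ℝ :=
  -∑ x : α, prVal p X x * Real.logb 2 (prVal p X x)

/-- Conditional Shannon entropy H(X | Y). -/
noncomputable def condEntropy {Ω α β : Type*} [Fintype Ω] [Fintype α] [Fintype β]
    [DecidableEq α] [DecidableEq β] (p : Ω → ℝ) (X : Ω → α) (Y : Ω → β) : ℝ :=
  entropy p (fun ω => (X ω, Y ω)) - entropy p Y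

/-- Mutual information I(X ; Y). -/
noncomputable def mutualInfo {Ω α β : Type*} [Fintype Ω] [Fintype α] [Fintype β]
    [DecidableEq α] [DecidableEq β] (p : Ω → ℝ) (X : Ω → α) (Y : Ω → β) : ℝ :=
  entropy p X - condEntropy p X Y

/-- Conditional mutual information I(X ; Y | Z) = H(X|Z) - H(X | (Y,Z)). -/
noncomputable def condMutualInfo {Ω α β γ : Type*} [Fintype Ω] [Fintype α] [Fintype β] [Fintype γ]
    [DecidableEq α] [DecidableEq β] [DecidableEq γ]
    (p : Ω → ℝ) (X : Ω → α) (Y : Ω → β) (Z : Ω → γ) : ℝ :=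
  condEntropy p X Z - condEntropy p X (fun ω => (Y ω, Z ω))

set_option linter.unusedVariables false

section Aux

variable {Ω α β : Type*} [Fintype Ω] (p : Ω → ℝ)

lemma prVal_nonneg [DecidableEq α] (hp : ∀ ω, 0 ≤ p ω) (X : Ω → α) (x : α) :
    0 ≤ prVal p X x :=
  Finset.sum_nonneg fun ω _ => hp ω

lemma prVal_comp_le [DecidableEq α] [DecidableEq β] (hp : ∀ ω, 0 ≤ p ω)
    (X : Ω → α) (f : α → β) (x : α) :
    prVal p X x ≤ prVal p (fun ω => f (X ω)) (f x) := by
  apply Finset.sum_le_sum_of_subset_of_nonneg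
  · intro ω hω
    simp only [Finset.mem_filter, Finset.mem_univ, true_and] at *
    rw [hω]
  · intro ω _ _; exact hp ω

lemma le_prVal_self [DecidableEq α] (hp : ∀ ω, 0 ≤ p ω) (X : Ω → α) (ω : Ω) :
    p ω ≤ prVal p X (X ω) :=
  Finset.single_le_sum (fun ω _ => hp ω) (by simp)

lemma sum_prVal_mul [DecidableEq α] [Fintype α] (X : Ω → α) (g : α → ℝ) :
    ∑ x, prVal p X x * g x = ∑ ω, p ω * g (X ω) := by
  unfold prVal
  rw [← Finset.sum_fiberwise (Finset.univ : Finset Ω) X (fun ω => p ω * g (X ω))]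
  refine Finset.sum_congr rfl fun x _ => ?_
  rw [Finset.sum_mul]
  refine Finset.sum_congr rfl fun ω hω => ?_
  simp only [Finset.mem_filter] at hω
  rw [hω.2]

lemma sum_prVal [DecidableEq α] [Fintype α] (X : Ω → α) :
    ∑ x, prVal p X x = ∑ ω, p ω := by
  have := sum_prVal_mul p X (fun _ => 1)
  simpa using this

lemma prVal_le_one [DecidableEq α] (hp : ∀ ω, 0 ≤ p ω) (hsum : ∑ ω, p ω = 1)
    (X : Ω → α) (x : α) : prVal p X x ≤ 1 := by
  rw [← hsum]
  exact Finset.sum_le_sum_of_subset_of_nonneg (Finset.subset_univ _) (fun ω _ _ => hp ω)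

lemma entropy_eq [DecidableEq α] [Fintype α] (X : Ω → α) :
    entropy p X = -∑ ω, p ω * Real.logb 2 (prVal p X (X ω)) := by
  unfold entropy
  rw [sum_prVal_mul]

lemma sum_prVal_pair [DecidableEq α] [Fintype α] [DecidableEq β]
    (A : Ω → α) (B : Ω → β) (b : β) :
    ∑ a, prVal p (fun ω => (A ω, B ω)) (a, b) = prVal p B b := by
  unfold prVal
  rw [← Finset.sum_fiberwise (Finset.univ.filter fun ω => B ω = b) A p]
  refine Finset.sum_congr rfl fun a _ => ?_
  congr 1
  rw [Finset.filter_filter]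
  apply Finset.filter_congr
  intro ω _
  simp [Prod.ext_iff, and_comm]

lemma gibbs {ι : Type*} [Fintype ι] (P Q : ι → ℝ) (hP : ∀ i, 0 ≤ P i)
    (hQ : ∀ i, 0 ≤ Q i) (hPQ : ∀ i, P i ≠ 0 → 0 < Q i)
    (hle : ∑ i, Q i ≤ ∑ i, P i) :
    ∑ i, P i * Real.logb 2 (Q i) ≤ ∑ i, P i * Real.logb 2 (P i) := by
  have h2 : (0:ℝ) < Real.log 2 := Real.log_pos one_lt_two
  have key : ∀ i, P i * Real.logb 2 (Q i) - P i * Real.logb 2 (P i)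
      ≤ (Q i - P i) / Real.log 2 := by
    intro i
    rcases eq_or_lt_of_le (hP i) with h0 | h0
    · rw [← h0]
      simp only [zero_mul, sub_zero, sub_self]
      have := hQ i
      positivity
    · have hQi := hPQ i (ne_of_gt h0)
      have hlogeq : Real.logb 2 (Q i) - Real.logb 2 (P i)
          = Real.log (Q i / P i) / Real.log 2 := by
        rw [Real.log_div (ne_of_gt hQi) (ne_of_gt h0)]
        simp [Real.logb, sub_div]
      have hlog : Real.log (Q i / P i) ≤ Q i / P i - 1 :=
        Real.log_le_sub_one_of_pos (by positivity)
      calc P i * Real.logb 2 (Q i) - P i * Real.logb 2 (P i)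
          = P i * (Real.log (Q i / P i) / Real.log 2) := by rw [← mul_sub, hlogeq]
        _ ≤ P i * ((Q i / P i - 1) / Real.log 2) := by
            apply mul_le_mul_of_nonneg_left _ (le_of_lt h0)
            exact div_le_div_of_nonneg_right hlog h2.le
        _ = (Q i - P i) / Real.log 2 := by
            field_simp
  have : ∑ i, (P i * Real.logb 2 (Q i) - P i * Real.logb 2 (P i))
      ≤ ∑ i, (Q i - P i) / Real.log 2 := Finset.sum_le_sum fun i _ => key i
  rw [Finset.sum_sub_distrib] at this
  have h3 : ∑ i, (Q i - P i) / Real.log 2 = (∑ i, Q i - ∑ i, P i) / Real.log 2 := by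
    rw [← Finset.sum_div, Finset.sum_sub_distrib]
  rw [h3] at this
  have h4 : (∑ i, Q i - ∑ i, P i) / Real.log 2 ≤ 0 := by
    apply div_nonpos_of_nonpos_of_nonneg _ (le_of_lt h2)
    linarith
  linarith

end Aux

section Aux2

variable {Ω α β : Type*} [Fintype Ω] (p : Ω → ℝ)

lemma entropy_comp_le [DecidableEq α] [Fintype α] [DecidableEq β] [Fintype β]
    (hp : ∀ ω, 0 ≤ p ω) (X : Ω → α) (f : α → β) :
    entropy p (fun ω => f (X ω)) ≤ entropy p X := by
  rw [entropy_eq, entropy_eq, neg_le_neg_iff]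
  apply Finset.sum_le_sum
  intro ω _
  rcases eq_or_lt_of_le (hp ω) with h0 | h0
  · rw [← h0]; simp
  · apply mul_le_mul_of_nonneg_left _ (le_of_lt h0)
    apply Real.logb_le_logb_of_le one_lt_two
    · exact lt_of_lt_of_le h0 (le_prVal_self p hp X ω)
    · exact prVal_comp_le p hp X f (X ω)

lemma entropy_pair_le [DecidableEq α] [Fintype α] [DecidableEq β] [Fintype β]
    (hp : ∀ ω, 0 ≤ p ω) (hsum : ∑ ω, p ω = 1) (A : Ω → α) (B : Ω → β) :
    entropy p (fun ω => (A ω, B ω)) ≤ entropy p A + entropy p B := by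
  set P : α × β → ℝ := fun q => prVal p (fun ω => (A ω, B ω)) q with hPdef
  set Q : α × β → ℝ := fun q => prVal p A q.1 * prVal p B q.2 with hQdef
  have hPn : ∀ q, 0 ≤ P q := fun q => prVal_nonneg p hp _ q
  have hQn : ∀ q, 0 ≤ Q q := fun q =>
    mul_nonneg (prVal_nonneg p hp _ _) (prVal_nonneg p hp _ _)
  have hmargA : ∀ q : α × β, P q ≤ prVal p A q.1 := by
    rintro ⟨a, b⟩
    exact prVal_comp_le p hp (fun ω => (A ω, B ω)) Prod.fst (a, b)
  have hmargB : ∀ q : α × β, P q ≤ prVal p B q.2 := by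
    rintro ⟨a, b⟩
    exact prVal_comp_le p hp (fun ω => (A ω, B ω)) Prod.snd (a, b)
  have hPQ : ∀ q, P q ≠ 0 → 0 < Q q := by
    intro q hq
    have hPpos : 0 < P q := lt_of_le_of_ne (hPn q) (Ne.symm hq)
    exact mul_pos (lt_of_lt_of_le hPpos (hmargA q)) (lt_of_lt_of_le hPpos (hmargB q))
  have hQs : ∑ q, Q q ≤ ∑ q, P q := by
    have h1 : ∑ q : α × β, Q q = 1 := by
      rw [Fintype.sum_prod_type]
      simp only [hQdef]
      rw [← Finset.sum_mul_sum]
      rw [sum_prVal p A, sum_prVal p B, hsum, one_mul]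
    have h2 : ∑ q : α × β, P q = 1 := by rw [sum_prVal, hsum]
    rw [h1, h2]
  have hg := gibbs P Q hPn hQn hPQ hQs
  have hQterm : ∑ q, P q * Real.logb 2 (Q q)
      = ∑ q, P q * (Real.logb 2 (prVal p A q.1) + Real.logb 2 (prVal p B q.2)) := by
    refine Finset.sum_congr rfl fun q _ => ?_
    rcases eq_or_ne (P q) 0 with h | h
    · rw [h]; ring
    · congr 1
      have h1 : prVal p A q.1 ≠ 0 := ne_of_gt (lt_of_lt_of_le (lt_of_le_of_ne (hPn q) (Ne.symm h)) (hmargA q))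
      have h2 : prVal p B q.2 ≠ 0 := ne_of_gt (lt_of_lt_of_le (lt_of_le_of_ne (hPn q) (Ne.symm h)) (hmargB q))
      exact Real.logb_mul h1 h2
  have hsplit : ∑ q : α × β, P q * (Real.logb 2 (prVal p A q.1) + Real.logb 2 (prVal p B q.2))
      = (∑ ω, p ω * Real.logb 2 (prVal p A (A ω))) + (∑ ω, p ω * Real.logb 2 (prVal p B (B ω))) := by
    have := sum_prVal_mul p (fun ω => (A ω, B ω))
      (fun q => Real.logb 2 (prVal p A q.1) + Real.logb 2 (prVal p B q.2))
    rw [this]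
    rw [← Finset.sum_add_distrib]
    refine Finset.sum_congr rfl fun ω _ => ?_
    ring
  rw [hQterm, hsplit] at hg
  rw [entropy_eq p A, entropy_eq p B]
  have hJP : entropy p (fun ω => (A ω, B ω)) = -∑ q, P q * Real.logb 2 (P q) := rfl
  rw [hJP]
  linarith

end Aux2

section Aux3

variable {Ω α δ : Type*} [Fintype Ω] [Fintype α] [DecidableEq α] [Fintype δ] [DecidableEq δ]
  {n : ℕ} (p : Ω → ℝ)

/-- The "grouped" function used in both conditional lemmas. -/
noncomputable def Gfun (X : Fin n → Ω → α) (W : Ω → δ) (q : (Fin n → α) × δ) : ℝ :=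
  Real.logb 2 (prVal p W q.2)
    + ∑ i, (Real.logb 2 (prVal p (fun ω => (X i ω, W ω)) (q.1 i, q.2))
        - Real.logb 2 (prVal p W q.2))

lemma sum_PG (X : Fin n → Ω → α) (W : Ω → δ) :
    ∑ q : (Fin n → α) × δ,
        prVal p (fun ω => ((fun i => X i ω), W ω)) q * Gfun p X W q
      = -entropy p W
        + ∑ i, (-entropy p (fun ω => (X i ω, W ω)) + entropy p W) := by
  rw [sum_prVal_mul p (fun ω => ((fun i => X i ω), W ω)) (Gfun p X W)]
  unfold Gfun
  simp only []
  have : ∀ ω, p ω * (Real.logb 2 (prVal p W (W ω))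
      + ∑ i, (Real.logb 2 (prVal p (fun ω' => (X i ω', W ω')) (X i ω, W ω))
          - Real.logb 2 (prVal p W (W ω))))
      = p ω * Real.logb 2 (prVal p W (W ω))
      + ∑ i, (p ω * Real.logb 2 (prVal p (fun ω' => (X i ω', W ω')) (X i ω, W ω))
          - p ω * Real.logb 2 (prVal p W (W ω))) := by
    intro ω
    rw [mul_add, Finset.mul_sum]
    congr 1
    exact Finset.sum_congr rfl fun i _ => by ring
  rw [Finset.sum_congr rfl (fun ω _ => this ω), Finset.sum_add_distrib]
  rw [Finset.sum_comm]
  congr 1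
  · rw [entropy_eq]; ring
  refine Finset.sum_congr rfl fun i _ => ?_
  rw [Finset.sum_sub_distrib]
  rw [entropy_eq p (fun ω => (X i ω, W ω)), entropy_eq p W]
  ring

lemma cond_subadd (hp : ∀ ω, 0 ≤ p ω) (hsum : ∑ ω, p ω = 1)
    (X : Fin n → Ω → α) (W : Ω → δ) :
    entropy p (fun ω => ((fun i => X i ω), W ω)) - entropy p W
      ≤ ∑ i, (entropy p (fun ω => (X i ω, W ω)) - entropy p W) := by
  classical
  set J : Ω → (Fin n → α) × δ := fun ω => ((fun i => X i ω), W ω) with hJ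
  set P : (Fin n → α) × δ → ℝ := fun q => prVal p J q with hP
  set Q : (Fin n → α) × δ → ℝ := fun q =>
    if prVal p W q.2 = 0 then 0
    else prVal p W q.2 * ∏ i, (prVal p (fun ω => (X i ω, W ω)) (q.1 i, q.2) / prVal p W q.2)
    with hQ
  have hPn : ∀ q, 0 ≤ P q := fun q => prVal_nonneg p hp _ q
  have hmargW : ∀ q : (Fin n → α) × δ, P q ≤ prVal p W q.2 := by
    rintro ⟨x, w⟩
    exact prVal_comp_le p hp J Prod.snd (x, w)
  have hmargi : ∀ (q : (Fin n → α) × δ) (i : Fin n),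
      P q ≤ prVal p (fun ω => (X i ω, W ω)) (q.1 i, q.2) := by
    rintro ⟨x, w⟩ i
    exact prVal_comp_le p hp J (fun r => (r.1 i, r.2)) (x, w)
  have hQn : ∀ q, 0 ≤ Q q := by
    intro q
    simp only [hQ]
    split
    · exact le_rfl
    · exact mul_nonneg (prVal_nonneg p hp _ _)
        (Finset.prod_nonneg fun i _ =>
          div_nonneg (prVal_nonneg p hp _ _) (prVal_nonneg p hp _ _))
  have hPQ : ∀ q, P q ≠ 0 → 0 < Q q := by
    intro q hq
    have hPpos : 0 < P q := lt_of_le_of_ne (hPn q) (Ne.symm hq)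
    have hc : 0 < prVal p W q.2 := lt_of_lt_of_le hPpos (hmargW q)
    simp only [hQ, if_neg (ne_of_gt hc)]
    exact mul_pos hc (Finset.prod_pos fun i _ =>
      div_pos (lt_of_lt_of_le hPpos (hmargi q i)) hc)
  have hQs : ∑ q, Q q ≤ ∑ q, P q := by
    have h2 : ∑ q, P q = 1 := by rw [hP, sum_prVal, hsum]
    rw [h2]
    have h1 : ∑ q : (Fin n → α) × δ, Q q ≤ ∑ w : δ, prVal p W w := by
      rw [Fintype.sum_prod_type, Finset.sum_comm]
      apply Finset.sum_le_sum
      intro w _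
      rcases eq_or_ne (prVal p W w) 0 with hc | hc
      · simp only [hQ, hc, if_pos rfl]
        simp [hc]
      · have hcalc : ∑ x : Fin n → α, Q (x, w) = prVal p W w := by
          simp only [hQ, if_neg hc]
          rw [← Finset.mul_sum]
          have : ∑ x : Fin n → α, ∏ i, (prVal p (fun ω => (X i ω, W ω)) (x i, w) / prVal p W w)
              = ∏ i : Fin n, ∑ a : α, (prVal p (fun ω => (X i ω, W ω)) (a, w) / prVal p W w) := by
            rw [Finset.prod_univ_sum (fun _ => Finset.univ)
              (fun i a => prVal p (fun ω => (X i ω, W ω)) (a, w) / prVal p W w)]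
            rw [Fintype.piFinset_univ]
          rw [this]
          have heach : ∀ i : Fin n,
              ∑ a : α, (prVal p (fun ω => (X i ω, W ω)) (a, w) / prVal p W w) = 1 := by
            intro i
            rw [← Finset.sum_div, sum_prVal_pair, div_self hc]
          rw [Finset.prod_congr rfl fun i _ => heach i, Finset.prod_const_one, mul_one]
        rw [hcalc]
    rw [sum_prVal, hsum] at h1
    exact h1
  have hg := gibbs P Q hPn hQn hPQ hQs
  have hQterm : ∑ q, P q * Real.logb 2 (Q q) = ∑ q, P q * Gfun p X W q := by
    refine Finset.sum_congr rfl fun q _ => ?_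
    rcases eq_or_ne (P q) 0 with h | h
    · rw [h]; ring
    · have hPpos : 0 < P q := lt_of_le_of_ne (hPn q) (Ne.symm h)
      have hc : 0 < prVal p W q.2 := lt_of_lt_of_le hPpos (hmargW q)
      have hi : ∀ i : Fin n, 0 < prVal p (fun ω => (X i ω, W ω)) (q.1 i, q.2) :=
        fun i => lt_of_lt_of_le hPpos (hmargi q i)
      congr 1
      simp only [hQ, if_neg (ne_of_gt hc)]
      rw [Real.logb_mul (ne_of_gt hc)
        (ne_of_gt (Finset.prod_pos fun i _ => div_pos (hi i) hc))]
      rw [Real.logb_prod _ _ (fun i _ => ne_of_gt (div_pos (hi i) hc))]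
      unfold Gfun
      congr 1
      exact Finset.sum_congr rfl fun i _ =>
        Real.logb_div (ne_of_gt (hi i)) (ne_of_gt hc)
  rw [hQterm] at hg
  rw [sum_PG] at hg
  have hJP : entropy p J = -∑ q, P q * Real.logb 2 (P q) := rfl
  have : -entropy p W + ∑ i, (-entropy p (fun ω => (X i ω, W ω)) + entropy p W)
      ≤ -entropy p J := by rw [hJP]; linarith
  have hsplit : ∑ i, (-entropy p (fun ω => (X i ω, W ω)) + entropy p W)
      = -∑ i, (entropy p (fun ω => (X i ω, W ω)) - entropy p W) := by
    rw [← Finset.sum_neg_distrib]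
    exact Finset.sum_congr rfl fun i _ => by ring
  rw [hsplit] at this
  linarith

end Aux3

section Aux4

variable {Ω α δ : Type*} [Fintype Ω] [Fintype α] [DecidableEq α] [Fintype δ] [DecidableEq δ]
  {n : ℕ} (p : Ω → ℝ)

lemma cond_indep_eq (hp : ∀ ω, 0 ≤ p ω) (hsum : ∑ ω, p ω = 1)
    (X : Fin n → Ω → α) (W : Ω → δ)
    (hci : ∀ (x : Fin n → α) (t : δ),
      prVal p (fun ω => ((fun i => X i ω), W ω)) (x, t) * (prVal p W t) ^ (n - 1)
        = ∏ i, prVal p (fun ω => (X i ω, W ω)) (x i, t)) :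
    entropy p (fun ω => ((fun i => X i ω), W ω)) - entropy p W
      = ∑ i, (entropy p (fun ω => (X i ω, W ω)) - entropy p W) := by
  classical
  set J : Ω → (Fin n → α) × δ := fun ω => ((fun i => X i ω), W ω) with hJ
  set P : (Fin n → α) × δ → ℝ := fun q => prVal p J q with hP
  have hPn : ∀ q, 0 ≤ P q := fun q => prVal_nonneg p hp _ q
  have hmargW : ∀ q : (Fin n → α) × δ, P q ≤ prVal p W q.2 := by
    rintro ⟨x, w⟩
    exact prVal_comp_le p hp J Prod.snd (x, w)
  have hmargi : ∀ (q : (Fin n → α) × δ) (i : Fin n),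
      P q ≤ prVal p (fun ω => (X i ω, W ω)) (q.1 i, q.2) := by
    rintro ⟨x, w⟩ i
    exact prVal_comp_le p hp J (fun r => (r.1 i, r.2)) (x, w)
  have hterm : ∀ q, P q * Real.logb 2 (P q) = P q * Gfun p X W q := by
    intro q
    rcases eq_or_ne (P q) 0 with h | h
    · rw [h]; ring
    congr 1
    have hPpos : 0 < P q := lt_of_le_of_ne (hPn q) (Ne.symm h)
    have hc : 0 < prVal p W q.2 := lt_of_lt_of_le hPpos (hmargW q)
    have hi : ∀ i : Fin n, 0 < prVal p (fun ω => (X i ω, W ω)) (q.1 i, q.2) :=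
      fun i => lt_of_lt_of_le hPpos (hmargi q i)
    have hlog := congrArg (Real.logb 2) (hci q.1 q.2)
    rw [Real.logb_mul h (pow_ne_zero _ (ne_of_gt hc)), Real.logb_pow,
      Real.logb_prod _ _ (fun i _ => ne_of_gt (hi i))] at hlog
    have hGsplit : Gfun p X W q
        = Real.logb 2 (prVal p W q.2)
          + ((∑ i, Real.logb 2 (prVal p (fun ω => (X i ω, W ω)) (q.1 i, q.2)))
            - (n : ℝ) * Real.logb 2 (prVal p W q.2)) := by
      unfold Gfun
      rw [Finset.sum_sub_distrib, Finset.sum_const, Finset.card_univ, Fintype.card_fin,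
        nsmul_eq_mul]
    have hq1 : (q.1, q.2) = q := rfl
    cases n with
    | zero =>
      have ha : P q = 1 := by
        have := hci q.1 q.2
        simp only [Nat.zero_sub, pow_zero, mul_one, Finset.univ_eq_empty, Finset.prod_empty] at this
        rw [hq1] at this
        exact this
      have hcle : prVal p W q.2 ≤ 1 := prVal_le_one p hp hsum W q.2
      have hcge : (1:ℝ) ≤ prVal p W q.2 := ha ▸ hmargW q
      have hc1 : prVal p W q.2 = 1 := le_antisymm hcle hcge
      rw [hGsplit, ha, hc1]
      simp
    | succ m =>
      have hn : ((Nat.succ m - 1 : ℕ) : ℝ) = (m : ℝ) := by norm_num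
      rw [hn] at hlog
      have hPq : Real.logb 2 (prVal p J (q.1, q.2)) = Real.logb 2 (P q) := by rw [hq1]
      rw [hPq] at hlog
      rw [hGsplit]
      push_cast
      linarith
  have h1 : entropy p J = -∑ q, P q * Gfun p X W q := by
    have : entropy p J = -∑ q, P q * Real.logb 2 (P q) := rfl
    rw [this]
    congr 1
    exact Finset.sum_congr rfl fun q _ => hterm q
  rw [sum_PG] at h1
  have hsplit : ∑ i, (-entropy p (fun ω => (X i ω, W ω)) + entropy p W)
      = -∑ i, (entropy p (fun ω => (X i ω, W ω)) - entropy p W) := by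
    rw [← Finset.sum_neg_distrib]
    exact Finset.sum_congr rfl fun i _ => by ring
  rw [hsplit] at h1
  have : entropy p J = entropy p W + ∑ i, (entropy p (fun ω => (X i ω, W ω)) - entropy p W) := by
    linarith
  rw [hJ] at this
  linarith [this]

end Aux4

/-- Super-additivity of unintended memorization: if X₁,…,Xₙ are conditionally i.i.d.
given Θ, then Σᵢ I(Xᵢ; Θ̂ | Θ) ≤ I(X; Θ̂ | Θ) ≤ H(Θ̂). -/
theorem stmt3 {Ω α β γ : Type*} {n : ℕ}
    [Fintype Ω] [Fintype α] [DecidableEq α] [Fintype β] [DecidableEq β]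
    [Fintype γ] [DecidableEq γ]
    (p : Ω → ℝ) (hp : ∀ ω, 0 ≤ p ω) (hsum : ∑ ω, p ω = 1)
    (X : Fin n → Ω → α) (Theta : Ω → γ) (That : Ω → β)
    -- conditional independence of X₁,…,Xₙ given Θ
    (hci : ∀ (x : Fin n → α) (t : γ),
      prVal p (fun ω => ((fun i => X i ω), Theta ω)) (x, t) * (prVal p Theta t) ^ (n - 1)
        = ∏ i, prVal p (fun ω => (X i ω, Theta ω)) (x i, t))
    -- identically distributed given Θ
    (hid : ∀ (i j : Fin n) (x : α) (t : γ),
      prVal p (fun ω => (X i ω, Theta ω)) (x, t)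
        = prVal p (fun ω => (X j ω, Theta ω)) (x, t)) :
    ∑ i, condMutualInfo p (X i) That Theta
        ≤ condMutualInfo p (fun ω i => X i ω) That Theta ∧
      condMutualInfo p (fun ω i => X i ω) That Theta ≤ entropy p That := by
  simp only [condMutualInfo, condEntropy]
  set W : Ω → β × γ := fun ω => (That ω, Theta ω) with hW
  have hE : entropy p (fun ω => ((fun i => X i ω), Theta ω)) - entropy p Theta
      = ∑ i, (entropy p (fun ω => (X i ω, Theta ω)) - entropy p Theta) :=
    cond_indep_eq p hp hsum X Theta hci
  have hS : entropy p (fun ω => ((fun i => X i ω), W ω)) - entropy p W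
      ≤ ∑ i, (entropy p (fun ω => (X i ω, W ω)) - entropy p W) :=
    cond_subadd p hp hsum X W
  have hProj : entropy p (fun ω => ((fun i => X i ω), Theta ω))
      ≤ entropy p (fun ω => ((fun i => X i ω), W ω)) :=
    entropy_comp_le p hp (fun ω => ((fun i => X i ω), W ω)) (fun r => (r.1, r.2.2))
  have hPair : entropy p W ≤ entropy p That + entropy p Theta :=
    entropy_pair_le p hp hsum That Theta
  constructor
  · have hsum1 : ∑ i, ((entropy p (fun ω => (X i ω, Theta ω)) - entropy p Theta)
        - (entropy p (fun ω => (X i ω, W ω)) - entropy p W))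
        = ∑ i, (entropy p (fun ω => (X i ω, Theta ω)) - entropy p Theta)
          - ∑ i, (entropy p (fun ω => (X i ω, W ω)) - entropy p W) :=
      Finset.sum_sub_distrib _ _
    rw [hsum1]
    linarith
  · linarith
end

section
/- If X₁,…,Xₙ are conditionally independent given Z, then I(Xᵢ; Y | Z) ≤ I(Xᵢ; Y | Z, X₁,…,Xᵢ₋₁) for every i, and consequently Σᵢ I(Xᵢ; Y | Z) ≤ I((X₁,…,Xₙ); Y | Z). -/
open Finset Real

section basic
variable {Ω δ δ' : Type*} [Fintype Ω] (p : Ω → ℝ)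

lemma my_prVal_nonneg [DecidableEq δ] (hp : ∀ ω, 0 ≤ p ω) (F : Ω → δ) (x : δ) :
    0 ≤ prVal p F x :=
  Finset.sum_nonneg fun ω _ => hp ω

lemma my_prVal_comp [Fintype δ] [DecidableEq δ] [DecidableEq δ'] (F : Ω → δ) (g : δ → δ')
    (y : δ') :
    prVal p (fun ω => g (F ω)) y = ∑ x ∈ Finset.univ.filter (fun x => g x = y), prVal p F x := by
  unfold prVal
  rw [Finset.sum_filter, Finset.sum_filter]
  simp_rw [Finset.sum_filter]
  calc (∑ x : Ω, if g (F x) = y then p x else 0)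
      = ∑ x : Ω, ∑ d : δ, if F x = d then (if g d = y then p x else 0) else 0 := by
        refine Finset.sum_congr rfl fun x _ => ?_
        rw [Finset.sum_ite_eq]
        simp
    _ = ∑ d : δ, ∑ x : Ω, if F x = d then (if g d = y then p x else 0) else 0 :=
        Finset.sum_comm
    _ = ∑ d : δ, if g d = y then (∑ x : Ω, if F x = d then p x else 0) else 0 := by
        refine Finset.sum_congr rfl fun d _ => ?_
        by_cases h : g d = y <;> simp [h]

lemma my_prVal_inj [Fintype δ] [DecidableEq δ] [DecidableEq δ'] {g : δ → δ'}
    (hg : Function.Injective g) (F : Ω → δ) (x : δ) :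
    prVal p (fun ω => g (F ω)) (g x) = prVal p F x := by
  rw [my_prVal_comp]
  rw [show Finset.univ.filter (fun a => g a = g x) = {x} by
    ext a; simp [hg.eq_iff]]
  simp

lemma my_prVal_not_range [Fintype δ] [DecidableEq δ] [DecidableEq δ'] {g : δ → δ'} (F : Ω → δ)
    {y : δ'} (hy : ∀ x, g x ≠ y) :
    prVal p (fun ω => g (F ω)) y = 0 := by
  rw [my_prVal_comp]
  rw [show Finset.univ.filter (fun a => g a = y) = ∅ by ext a; simp [hy a]]
  simp

lemma my_entropy_inj [Fintype δ] [DecidableEq δ] [Fintype δ'] [DecidableEq δ'] {g : δ → δ'}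
    (hg : Function.Injective g) (F : Ω → δ) :
    entropy p (fun ω => g (F ω)) = entropy p F := by
  unfold entropy
  congr 1
  set φ : δ' → ℝ := fun y => prVal p (fun ω => g (F ω)) y * Real.logb 2 (prVal p (fun ω => g (F ω)) y) with hφ
  calc ∑ y : δ', φ y
      = ∑ y ∈ Finset.univ.image g, φ y := by
        refine (Finset.sum_subset (Finset.subset_univ _) fun y _ hy => ?_).symm
        have : prVal p (fun ω => g (F ω)) y = 0 :=
          my_prVal_not_range p F (fun x hx => hy (Finset.mem_image.mpr ⟨x, Finset.mem_univ x, hx⟩))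
        simp [hφ, this]
    _ = ∑ x : δ, φ (g x) := Finset.sum_image (fun x _ y _ h => hg h)
    _ = ∑ x : δ, prVal p F x * Real.logb 2 (prVal p F x) := by
        refine Finset.sum_congr rfl fun x _ => ?_
        simp only [hφ, my_prVal_inj p hg]

lemma my_prVal_fst [Fintype δ'] [DecidableEq δ] [DecidableEq δ'] (F : Ω → δ) (G : Ω → δ')
    (x : δ) :
    prVal p F x = ∑ y, prVal p (fun ω => (F ω, G ω)) (x, y) := by
  unfold prVal
  simp_rw [Finset.sum_filter, Prod.mk.injEq]
  rw [Finset.sum_comm]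
  congr 1; funext ω
  by_cases h : F ω = x <;> simp [h]

end basic

section gibbs

lemma my_gibbs {ι : Type*} [Fintype ι] (a b : ι → ℝ) (ha : ∀ i, 0 ≤ a i) (hb : ∀ i, 0 ≤ b i)
    (h0 : ∀ i, b i = 0 → a i = 0) (hs : ∑ i, b i ≤ ∑ i, a i) :
    ∑ i, a i * Real.log (b i) ≤ ∑ i, a i * Real.log (a i) := by
  have key : ∀ i, a i * Real.log (b i) - a i * Real.log (a i) ≤ b i - a i := by
    intro i
    rcases eq_or_lt_of_le (ha i) with h | h
    · simp [← h, hb i]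
    · have hbi : 0 < b i := by
        rcases eq_or_lt_of_le (hb i) with h' | h'
        · exact absurd (h0 i h'.symm) (ne_of_gt h)
        · exact h'
      have : Real.log (b i / a i) ≤ b i / a i - 1 :=
        Real.log_le_sub_one_of_pos (div_pos hbi h)
      rw [Real.log_div hbi.ne' h.ne'] at this
      have := mul_le_mul_of_nonneg_left this (le_of_lt h)
      calc a i * Real.log (b i) - a i * Real.log (a i)
          = a i * (Real.log (b i) - Real.log (a i)) := by ring
        _ ≤ a i * (b i / a i - 1) := mul_le_mul_of_nonneg_left (by linarith) (le_of_lt h)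
        _ = b i - a i := by field_simp
  have h1 : ∑ i, (a i * Real.log (b i) - a i * Real.log (a i)) ≤ ∑ i, (b i - a i) :=
    Finset.sum_le_sum fun i _ => key i
  rw [Finset.sum_sub_distrib, Finset.sum_sub_distrib] at h1
  linarith

end gibbs

section triple
variable {Ω 𝔸 𝔹 𝕌 : Type*} [Fintype Ω] [Fintype 𝔸] [DecidableEq 𝔸] [Fintype 𝔹] [DecidableEq 𝔹]
  [Fintype 𝕌] [DecidableEq 𝕌] (p : Ω → ℝ) (A : Ω → 𝔸) (B : Ω → 𝔹) (U : Ω → 𝕌)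

noncomputable def triJ (a : 𝔸) (b : 𝔹) (u : 𝕌) : ℝ :=
  prVal p (fun ω => (A ω, B ω, U ω)) (a, b, u)

lemma tri_s (a : 𝔸) (u : 𝕌) :
    prVal p (fun ω => (A ω, U ω)) (a, u) = ∑ b, triJ p A B U a b u := by
  rw [my_prVal_fst p (fun ω => (A ω, U ω)) B (a, u)]
  refine Finset.sum_congr rfl fun b _ => ?_
  exact (my_prVal_inj p (g := fun x : (𝔸 × 𝕌) × 𝔹 => (x.1.1, x.2, x.1.2))
    (by rintro ⟨⟨a, u⟩, b⟩ ⟨⟨a', u'⟩, b'⟩ h; simp_all [Prod.ext_iff])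
    (fun ω => ((A ω, U ω), B ω)) ((a, u), b)).symm

lemma tri_t (b : 𝔹) (u : 𝕌) :
    prVal p (fun ω => (B ω, U ω)) (b, u) = ∑ a, triJ p A B U a b u := by
  rw [my_prVal_fst p (fun ω => (B ω, U ω)) A (b, u)]
  refine Finset.sum_congr rfl fun a _ => ?_
  exact (my_prVal_inj p (g := fun x : (𝔹 × 𝕌) × 𝔸 => (x.2, x.1.1, x.1.2))
    (by rintro ⟨⟨b, u⟩, a⟩ ⟨⟨b', u'⟩, a'⟩ h; simp_all [Prod.ext_iff])
    (fun ω => ((B ω, U ω), A ω)) ((b, u), a)).symm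

lemma tri_m (u : 𝕌) :
    prVal p U u = ∑ a, ∑ b, triJ p A B U a b u := by
  rw [my_prVal_fst p U (fun ω => (A ω, B ω)) u, Fintype.sum_prod_type]
  refine Finset.sum_congr rfl fun a _ => Finset.sum_congr rfl fun b _ => ?_
  exact (my_prVal_inj p (g := fun x : 𝕌 × 𝔸 × 𝔹 => (x.2.1, x.2.2, x.1))
    (by rintro ⟨u, a, b⟩ ⟨u', a', b'⟩ h; simp_all [Prod.ext_iff])
    (fun ω => (U ω, A ω, B ω)) (u, (a, b))).symm

lemma tri_eABU : entropy p (fun ω => (A ω, B ω, U ω))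
    = -∑ a, ∑ b, ∑ u, triJ p A B U a b u * Real.logb 2 (triJ p A B U a b u) := by
  unfold entropy triJ
  rw [Fintype.sum_prod_type]
  simp_rw [Fintype.sum_prod_type]

lemma tri_eAU : entropy p (fun ω => (A ω, U ω))
    = -∑ a, ∑ b, ∑ u, triJ p A B U a b u
        * Real.logb 2 (∑ b', triJ p A B U a b' u) := by
  unfold entropy
  rw [Fintype.sum_prod_type]
  simp_rw [tri_s p A B U]
  congr 1
  refine Finset.sum_congr rfl fun a _ => ?_
  rw [Finset.sum_comm]
  refine Finset.sum_congr rfl fun u _ => ?_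
  rw [← Finset.sum_mul]

lemma tri_eBU : entropy p (fun ω => (B ω, U ω))
    = -∑ a, ∑ b, ∑ u, triJ p A B U a b u
        * Real.logb 2 (∑ a', triJ p A B U a' b u) := by
  unfold entropy
  rw [Fintype.sum_prod_type]
  simp_rw [tri_t p A B U]
  congr 1
  calc ∑ b, ∑ u, (∑ a, triJ p A B U a b u) * Real.logb 2 (∑ a, triJ p A B U a b u)
      = ∑ b, ∑ u, ∑ a, triJ p A B U a b u * Real.logb 2 (∑ a', triJ p A B U a' b u) := by
        simp_rw [Finset.sum_mul]
    _ = ∑ b, ∑ a, ∑ u, triJ p A B U a b u * Real.logb 2 (∑ a', triJ p A B U a' b u) :=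
        Finset.sum_congr rfl fun b _ => Finset.sum_comm
    _ = ∑ a, ∑ b, ∑ u, triJ p A B U a b u * Real.logb 2 (∑ a', triJ p A B U a' b u) :=
        Finset.sum_comm

lemma tri_eU : entropy p U
    = -∑ a, ∑ b, ∑ u, triJ p A B U a b u
        * Real.logb 2 (∑ a', ∑ b', triJ p A B U a' b' u) := by
  unfold entropy
  simp_rw [tri_m p A B U]
  congr 1
  calc ∑ u, (∑ a, ∑ b, triJ p A B U a b u) * Real.logb 2 (∑ a, ∑ b, triJ p A B U a b u)
      = ∑ u, ∑ a, ∑ b, triJ p A B U a b u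
          * Real.logb 2 (∑ a', ∑ b', triJ p A B U a' b' u) := by
        simp_rw [Finset.sum_mul]
    _ = ∑ a, ∑ u, ∑ b, triJ p A B U a b u
          * Real.logb 2 (∑ a', ∑ b', triJ p A B U a' b' u) := Finset.sum_comm
    _ = ∑ a, ∑ b, ∑ u, triJ p A B U a b u
          * Real.logb 2 (∑ a', ∑ b', triJ p A B U a' b' u) :=
        Finset.sum_congr rfl fun a _ => Finset.sum_comm

end triple

section core
variable {𝔸 𝔹 𝕌 : Type*} [Fintype 𝔸] [Fintype 𝔹] [Fintype 𝕌]

lemma sum3_prod (f : 𝔸 → 𝔹 → 𝕌 → ℝ) :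
    ∑ x : 𝔸 × 𝔹 × 𝕌, f x.1 x.2.1 x.2.2 = ∑ a, ∑ b, ∑ u, f a b u := by
  rw [Fintype.sum_prod_type]
  simp_rw [Fintype.sum_prod_type]

lemma sum3_comm (f : 𝔸 → 𝔹 → 𝕌 → ℝ) :
    ∑ a, ∑ b, ∑ u, f a b u = ∑ u, ∑ a, ∑ b, f a b u :=
  (Finset.sum_congr rfl fun a _ => Finset.sum_comm).trans Finset.sum_comm

lemma tri_core (J : 𝔸 → 𝔹 → 𝕌 → ℝ) (hJ0 : ∀ a b u, 0 ≤ J a b u) :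
    (∑ a, ∑ b, ∑ u, J a b u * Real.logb 2 (∑ b', J a b' u))
      + ∑ a, ∑ b, ∑ u, J a b u * Real.logb 2 (∑ a', J a' b u)
    ≤ (∑ a, ∑ b, ∑ u, J a b u * Real.logb 2 (J a b u))
      + ∑ a, ∑ b, ∑ u, J a b u * Real.logb 2 (∑ a', ∑ b', J a' b' u) := by
  have hs0 : ∀ a u, (0:ℝ) ≤ ∑ b', J a b' u := fun a u => Finset.sum_nonneg fun b' _ => hJ0 _ _ _
  have ht0 : ∀ b u, (0:ℝ) ≤ ∑ a', J a' b u := fun b u => Finset.sum_nonneg fun a' _ => hJ0 _ _ _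
  have hm0 : ∀ u, (0:ℝ) ≤ ∑ a', ∑ b', J a' b' u := fun u => Finset.sum_nonneg fun a' _ => hs0 _ _
  have hJs : ∀ a b u, J a b u ≤ ∑ b', J a b' u := fun a b u =>
    Finset.single_le_sum (fun b' _ => hJ0 a b' u) (Finset.mem_univ b)
  have hJt : ∀ a b u, J a b u ≤ ∑ a', J a' b u := fun a b u =>
    Finset.single_le_sum (fun a' _ => hJ0 a' b u) (Finset.mem_univ a)
  have hsm : ∀ a u, (∑ b', J a b' u) ≤ ∑ a', ∑ b', J a' b' u := fun a u =>
    Finset.single_le_sum (fun a' _ => hs0 a' u) (Finset.mem_univ a)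
  -- Gibbs
  have hG : ∑ x : 𝔸 × 𝔹 × 𝕌, J x.1 x.2.1 x.2.2
        * Real.log ((∑ b', J x.1 b' x.2.2) * (∑ a', J a' x.2.1 x.2.2)
            / (∑ a', ∑ b', J a' b' x.2.2))
      ≤ ∑ x : 𝔸 × 𝔹 × 𝕌, J x.1 x.2.1 x.2.2 * Real.log (J x.1 x.2.1 x.2.2) := by
    refine my_gibbs _ _ (fun x => hJ0 _ _ _)
      (fun x => div_nonneg (mul_nonneg (hs0 _ _) (ht0 _ _)) (hm0 _)) ?_ ?_
    · rintro ⟨a, b, u⟩ h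
      by_contra hax
      have hJx : 0 < J a b u := lt_of_le_of_ne (hJ0 a b u) (Ne.symm hax)
      have h1 : 0 < ∑ b', J a b' u := lt_of_lt_of_le hJx (hJs a b u)
      have h2 : 0 < ∑ a', J a' b u := lt_of_lt_of_le hJx (hJt a b u)
      have h3 : 0 < ∑ a', ∑ b', J a' b' u := lt_of_lt_of_le h1 (hsm a u)
      exact absurd h (ne_of_gt (div_pos (mul_pos h1 h2) h3))
    · have e1 : ∑ x : 𝔸 × 𝔹 × 𝕌, (∑ b', J x.1 b' x.2.2) * (∑ a', J a' x.2.1 x.2.2)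
            / (∑ a', ∑ b', J a' b' x.2.2)
          = ∑ a, ∑ b, ∑ u, (∑ b', J a b' u) * (∑ a', J a' b u)
            / (∑ a', ∑ b', J a' b' u) :=
        sum3_prod (fun a b u => (∑ b', J a b' u) * (∑ a', J a' b u) / (∑ a', ∑ b', J a' b' u))
      have e2 : ∑ x : 𝔸 × 𝔹 × 𝕌, J x.1 x.2.1 x.2.2 = ∑ a, ∑ b, ∑ u, J a b u := sum3_prod _
      rw [e1, e2, sum3_comm, sum3_comm (fun a b u => J a b u)]
      refine Finset.sum_le_sum fun u _ => ?_
      have E : ((∑ a, ∑ b', J a b' u) * (∑ b, ∑ a', J a' b u)) / (∑ a', ∑ b', J a' b' u)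
          = ∑ a, ∑ b, (∑ b', J a b' u) * (∑ a', J a' b u) / (∑ a', ∑ b', J a' b' u) := by
        rw [Finset.sum_mul_sum, Finset.sum_div]
        simp_rw [Finset.sum_div]
      rw [← E]
      have h2 : ∑ b, ∑ a', J a' b u = ∑ a, ∑ b, J a b u := Finset.sum_comm
      rw [h2]
      rcases eq_or_lt_of_le (hm0 u) with h | h
      · rw [← h]; simp
      · rw [mul_div_assoc, div_self (ne_of_gt h), mul_one]
  -- bridge to logb
  have hL2 : (0:ℝ) < Real.log 2 := Real.log_pos one_lt_two
  have eR : ∑ a, ∑ b, ∑ u, J a b u * Real.logb 2 (J a b u)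
      = (∑ x : 𝔸 × 𝔹 × 𝕌, J x.1 x.2.1 x.2.2 * Real.log (J x.1 x.2.1 x.2.2)) / Real.log 2 := by
    rw [show ∑ x : 𝔸 × 𝔹 × 𝕌, J x.1 x.2.1 x.2.2 * Real.log (J x.1 x.2.1 x.2.2)
        = ∑ a, ∑ b, ∑ u, J a b u * Real.log (J a b u) from sum3_prod (fun a b u => J a b u * Real.log (J a b u)), Finset.sum_div]
    refine Finset.sum_congr rfl fun a _ => ?_
    rw [Finset.sum_div]
    refine Finset.sum_congr rfl fun b _ => ?_
    rw [Finset.sum_div]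
    refine Finset.sum_congr rfl fun u _ => ?_
    simp [Real.logb, mul_div_assoc]
  have eL : (∑ a, ∑ b, ∑ u, J a b u * Real.logb 2 (∑ b', J a b' u))
        + (∑ a, ∑ b, ∑ u, J a b u * Real.logb 2 (∑ a', J a' b u))
        - (∑ a, ∑ b, ∑ u, J a b u * Real.logb 2 (∑ a', ∑ b', J a' b' u))
      = (∑ x : 𝔸 × 𝔹 × 𝕌, J x.1 x.2.1 x.2.2
          * Real.log ((∑ b', J x.1 b' x.2.2) * (∑ a', J a' x.2.1 x.2.2)
              / (∑ a', ∑ b', J a' b' x.2.2))) / Real.log 2 := by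
    rw [show ∑ x : 𝔸 × 𝔹 × 𝕌, J x.1 x.2.1 x.2.2
          * Real.log ((∑ b', J x.1 b' x.2.2) * (∑ a', J a' x.2.1 x.2.2)
              / (∑ a', ∑ b', J a' b' x.2.2))
        = ∑ a, ∑ b, ∑ u, J a b u
          * Real.log ((∑ b', J a b' u) * (∑ a', J a' b u) / (∑ a', ∑ b', J a' b' u))
        from sum3_prod (fun a b u => J a b u
          * Real.log ((∑ b', J a b' u) * (∑ a', J a' b u) / (∑ a', ∑ b', J a' b' u))),
        Finset.sum_div]
    rw [← Finset.sum_add_distrib, ← Finset.sum_sub_distrib]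
    refine Finset.sum_congr rfl fun a _ => ?_
    rw [Finset.sum_div, ← Finset.sum_add_distrib, ← Finset.sum_sub_distrib]
    refine Finset.sum_congr rfl fun b _ => ?_
    rw [Finset.sum_div, ← Finset.sum_add_distrib, ← Finset.sum_sub_distrib]
    refine Finset.sum_congr rfl fun u _ => ?_
    rcases eq_or_lt_of_le (hJ0 a b u) with h | h
    · rw [← h]; simp
    · have h1 : 0 < ∑ b', J a b' u := lt_of_lt_of_le h (hJs a b u)
      have h2 : 0 < ∑ a', J a' b u := lt_of_lt_of_le h (hJt a b u)
      have h3 : 0 < ∑ a', ∑ b', J a' b' u := lt_of_lt_of_le h1 (hsm a u)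
      rw [Real.log_div (mul_ne_zero h1.ne' h2.ne') h3.ne', Real.log_mul h1.ne' h2.ne']
      simp only [Real.logb]
      ring
  have final : (∑ x : 𝔸 × 𝔹 × 𝕌, J x.1 x.2.1 x.2.2
          * Real.log ((∑ b', J x.1 b' x.2.2) * (∑ a', J a' x.2.1 x.2.2)
              / (∑ a', ∑ b', J a' b' x.2.2))) / Real.log 2
      ≤ (∑ x : 𝔸 × 𝔹 × 𝕌, J x.1 x.2.1 x.2.2 * Real.log (J x.1 x.2.1 x.2.2)) / Real.log 2 := by
    exact div_le_div_of_nonneg_right hG hL2.le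
  linarith [eL.le, eL.ge, eR.le, eR.ge, final]

end core

section core2
variable {𝔸 𝔹 𝕌 : Type*} [Fintype 𝔸] [Fintype 𝔹] [Fintype 𝕌]

lemma tri_core_eq (J : 𝔸 → 𝔹 → 𝕌 → ℝ) (hJ0 : ∀ a b u, 0 ≤ J a b u)
    (hfact : ∀ a b u, (∑ b', J a b' u) * (∑ a', J a' b u)
      = J a b u * (∑ a', ∑ b', J a' b' u)) :
    (∑ a, ∑ b, ∑ u, J a b u * Real.logb 2 (J a b u))
      + ∑ a, ∑ b, ∑ u, J a b u * Real.logb 2 (∑ a', ∑ b', J a' b' u)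
    = (∑ a, ∑ b, ∑ u, J a b u * Real.logb 2 (∑ b', J a b' u))
      + ∑ a, ∑ b, ∑ u, J a b u * Real.logb 2 (∑ a', J a' b u) := by
  have hs0 : ∀ a u, (0:ℝ) ≤ ∑ b', J a b' u := fun a u => Finset.sum_nonneg fun b' _ => hJ0 _ _ _
  have hJs : ∀ a b u, J a b u ≤ ∑ b', J a b' u := fun a b u =>
    Finset.single_le_sum (fun b' _ => hJ0 a b' u) (Finset.mem_univ b)
  have hJt : ∀ a b u, J a b u ≤ ∑ a', J a' b u := fun a b u =>
    Finset.single_le_sum (fun a' _ => hJ0 a' b u) (Finset.mem_univ a)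
  have hsm : ∀ a u, (∑ b', J a b' u) ≤ ∑ a', ∑ b', J a' b' u := fun a u =>
    Finset.single_le_sum (fun a' _ => hs0 a' u) (Finset.mem_univ a)
  rw [← Finset.sum_add_distrib, ← Finset.sum_add_distrib]
  refine Finset.sum_congr rfl fun a _ => ?_
  rw [← Finset.sum_add_distrib, ← Finset.sum_add_distrib]
  refine Finset.sum_congr rfl fun b _ => ?_
  rw [← Finset.sum_add_distrib, ← Finset.sum_add_distrib]
  refine Finset.sum_congr rfl fun u _ => ?_
  rcases eq_or_lt_of_le (hJ0 a b u) with h | h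
  · rw [← h]; simp
  · have h1 : 0 < ∑ b', J a b' u := lt_of_lt_of_le h (hJs a b u)
    have h2 : 0 < ∑ a', J a' b u := lt_of_lt_of_le h (hJt a b u)
    have h3 : 0 < ∑ a', ∑ b', J a' b' u := lt_of_lt_of_le h1 (hsm a u)
    have key : Real.logb 2 (∑ b', J a b' u) + Real.logb 2 (∑ a', J a' b u)
        = Real.logb 2 (J a b u) + Real.logb 2 (∑ a', ∑ b', J a' b' u) := by
      rw [← Real.logb_mul h1.ne' h2.ne', hfact a b u, Real.logb_mul h.ne' h3.ne']
    linear_combination (J a b u) * key.symm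

end core2

section glue
variable {Ω 𝔸 𝔹 𝕌 : Type*} [Fintype Ω] [Fintype 𝔸] [DecidableEq 𝔸] [Fintype 𝔹] [DecidableEq 𝔹]
  [Fintype 𝕌] [DecidableEq 𝕌] (p : Ω → ℝ) (A : Ω → 𝔸) (B : Ω → 𝔹) (U : Ω → 𝕌)

lemma my_submod (hp : ∀ ω, 0 ≤ p ω) :
    entropy p (fun ω => (A ω, B ω, U ω)) + entropy p U
      ≤ entropy p (fun ω => (A ω, U ω)) + entropy p (fun ω => (B ω, U ω)) := by
  rw [tri_eABU p A B U, tri_eAU p A B U, tri_eBU p A B U, tri_eU p A B U]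
  have := tri_core (triJ p A B U) (fun a b u => my_prVal_nonneg p hp _ _)
  linarith

lemma my_ci (hp : ∀ ω, 0 ≤ p ω)
    (hfact : ∀ a b u, prVal p (fun ω => (A ω, U ω)) (a, u)
        * prVal p (fun ω => (B ω, U ω)) (b, u)
      = prVal p (fun ω => (A ω, B ω, U ω)) (a, b, u) * prVal p U u) :
    entropy p (fun ω => (A ω, B ω, U ω)) + entropy p U
      = entropy p (fun ω => (A ω, U ω)) + entropy p (fun ω => (B ω, U ω)) := by
  rw [tri_eABU p A B U, tri_eAU p A B U, tri_eBU p A B U, tri_eU p A B U]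
  have := tri_core_eq (triJ p A B U) (fun a b u => my_prVal_nonneg p hp _ _)
    (fun a b u => by
      rw [← tri_s p A B U a u, ← tri_t p A B U b u, ← tri_m p A B U u]
      exact hfact a b u)
  linarith

end glue

section marg
variable {Ω γ : Type*} {n : ℕ} {α : Fin n → Type*} [Fintype Ω] [Fintype γ] [DecidableEq γ]
  [∀ i, Fintype (α i)] [∀ i, DecidableEq (α i)] (p : Ω → ℝ) (X : ∀ i, Ω → α i) (Z : Ω → γ)

lemma marg_helper {δ : Type*} [Fintype δ] [DecidableEq δ] (G : (∀ j, α j) → δ) (d : δ) (z : γ) :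
    prVal p (fun ω => (G (fun j => X j ω), Z ω)) (d, z)
      = ∑ x ∈ Finset.univ.filter (fun x => G x = d),
          prVal p (fun ω => ((fun j => X j ω), Z ω)) (x, z) := by
  rw [my_prVal_comp p (fun ω => ((fun j => X j ω), Z ω)) (fun y => (G y.1, y.2)) (d, z)]
  rw [Finset.sum_filter, Finset.sum_filter, Fintype.sum_prod_type]
  refine Finset.sum_congr rfl fun x _ => ?_
  by_cases h : G x = d
  · simp [h, Prod.ext_iff]
  · simp [h, Prod.ext_iff]

lemma my_M (z : γ)
    (hci : ∀ (x : ∀ i, α i),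
      prVal p (fun ω => ((fun i => X i ω), Z ω)) (x, z) * (prVal p Z z) ^ (n - 1)
        = ∏ i, prVal p (fun ω => (X i ω, Z ω)) (x i, z))
    (S : Finset (Fin n)) (v : ∀ j, α j) :
    (∑ x ∈ Fintype.piFinset (fun j => if j ∈ S then {v j} else Finset.univ),
        prVal p (fun ω => ((fun j => X j ω), Z ω)) (x, z)) * (prVal p Z z) ^ (n - 1)
      = (∏ j ∈ S, prVal p (fun ω => (X j ω, Z ω)) (v j, z))
        * (prVal p Z z) ^ (n - S.card) := by
  have fact2 : ∀ j : Fin n, ∑ a, prVal p (fun ω => (X j ω, Z ω)) (a, z) = prVal p Z z := by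
    intro j
    rw [my_prVal_fst p Z (X j) z]
    refine Finset.sum_congr rfl fun a _ => ?_
    exact (my_prVal_inj p (g := fun y : α j × γ => (y.2, y.1))
      (by rintro ⟨a, z⟩ ⟨a', z'⟩ h; simp_all [Prod.ext_iff]) (fun ω => (X j ω, Z ω)) (a, z)).symm
  rw [Finset.sum_mul]
  calc ∑ x ∈ Fintype.piFinset (fun j => if j ∈ S then {v j} else Finset.univ),
        prVal p (fun ω => ((fun j => X j ω), Z ω)) (x, z) * (prVal p Z z) ^ (n - 1)
      = ∑ x ∈ Fintype.piFinset (fun j => if j ∈ S then {v j} else Finset.univ),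
        ∏ j, prVal p (fun ω => (X j ω, Z ω)) (x j, z) :=
        Finset.sum_congr rfl fun x _ => hci x
    _ = ∏ j, ∑ a ∈ (if j ∈ S then {v j} else Finset.univ),
          prVal p (fun ω => (X j ω, Z ω)) (a, z) :=
        (Finset.prod_univ_sum (fun j => if j ∈ S then {v j} else Finset.univ)
          (fun j a => prVal p (fun ω => (X j ω, Z ω)) (a, z))).symm
    _ = ∏ j, (if j ∈ S then prVal p (fun ω => (X j ω, Z ω)) (v j, z) else prVal p Z z) := by
        refine Finset.prod_congr rfl fun j _ => ?_
        by_cases h : j ∈ S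
        · simp [h]
        · simp [h, fact2 j]
    _ = (∏ j ∈ S, prVal p (fun ω => (X j ω, Z ω)) (v j, z))
        * (prVal p Z z) ^ (n - S.card) := by
        rw [Finset.prod_ite, show Finset.univ.filter (fun j => j ∈ S) = S from by ext j; simp,
          show Finset.univ.filter (fun j : Fin n => j ∉ S) = Sᶜ from by ext j; simp,
          Finset.prod_const, Finset.card_compl, Fintype.card_fin]

end marg

section key
variable {Ω γ : Type*} {n : ℕ} {α : Fin n → Type*} [Fintype Ω] [Fintype γ] [DecidableEq γ]
  [∀ i, Fintype (α i)] [∀ i, DecidableEq (α i)] (p : Ω → ℝ) (X : ∀ i, Ω → α i) (Z : Ω → γ)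

lemma my_key (hp : ∀ ω, 0 ≤ p ω) (hne : ∀ j, Nonempty (α j))
    (hci : ∀ (x : ∀ i, α i) (z : γ),
      prVal p (fun ω => ((fun i => X i ω), Z ω)) (x, z) * (prVal p Z z) ^ (n - 1)
        = ∏ i, prVal p (fun ω => (X i ω, Z ω)) (x i, z))
    (i : Fin n) (a : α i) (w : ∀ j : Fin i.1, α (Fin.castLE i.isLt.le j)) (z : γ) :
    prVal p (fun ω => (X i ω, Z ω)) (a, z)
      * prVal p (fun ω => ((fun j : Fin i.1 => X (Fin.castLE i.isLt.le j) ω), Z ω)) (w, z)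
    = prVal p (fun ω => (X i ω, (fun j : Fin i.1 => X (Fin.castLE i.isLt.le j) ω), Z ω)) (a, w, z)
      * prVal p Z z := by
  classical
  obtain ⟨v, hv1, hv2⟩ : ∃ v : ∀ j, α j,
      (∀ (j : Fin n) (h : j.1 < i.1), v j = w ⟨j.1, h⟩) ∧ v i = a := by
    refine ⟨fun j => if h : j.1 < i.1 then w ⟨j.1, h⟩
      else if h' : i = j then h' ▸ a else (hne j).some, fun j h => dif_pos h, ?_⟩
    show (if h : i.1 < i.1 then w ⟨i.1, h⟩
      else if h' : i = i then h' ▸ a else (hne i).some) = a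
    rw [dif_neg (lt_irrefl _), dif_pos rfl]
  set S2 : Finset (Fin n) := Finset.univ.filter (fun j => j.1 < i.1) with hS2
  have hmemS2 : ∀ j : Fin n, j ∈ S2 ↔ j.1 < i.1 := fun j => by simp [hS2]
  have hiS2 : i ∉ S2 := by simp [hmemS2]
  have hcard : S2.card = i.1 := by
    rw [show S2 = Finset.map ⟨Fin.castLE i.isLt.le, Fin.castLE_injective _⟩ Finset.univ from by
      ext j
      simp only [hmemS2, Finset.mem_map, Finset.mem_univ, true_and,
        Function.Embedding.coeFn_mk]
      constructor
      · rintro h; exact ⟨⟨j.1, h⟩, Fin.ext rfl⟩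
      · rintro ⟨a', rfl⟩; exact a'.2]
    rw [Finset.card_map, Finset.card_univ, Fintype.card_fin]
  have hpf : ∀ (S : Finset (Fin n)) (x : ∀ j, α j),
      x ∈ Fintype.piFinset (fun j => if j ∈ S then {v j} else Finset.univ)
        ↔ ∀ j ∈ S, x j = v j := by
    intro S x
    rw [Fintype.mem_piFinset]
    constructor
    · intro h j hj; have := h j; rw [if_pos hj] at this; simpa using this
    · intro h j; by_cases hj : j ∈ S
      · rw [if_pos hj]; simpa using h j hj
      · rw [if_neg hj]; simp
  have key2 : ∀ x : ∀ j, α j,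
      ((fun j : Fin i.1 => x (Fin.castLE i.isLt.le j)) = w ↔ ∀ j ∈ S2, x j = v j) := by
    intro x
    rw [funext_iff]
    constructor
    · intro h j hj
      rw [hmemS2] at hj
      rw [hv1 j hj]
      exact h ⟨j.1, hj⟩
    · intro h j
      have hj : (Fin.castLE i.isLt.le j).1 < i.1 := j.2
      have := h (Fin.castLE i.isLt.le j) ((hmemS2 _).mpr hj)
      exact this.trans (hv1 _ hj)
  -- the three marginals as piFinset sums
  have hA : prVal p (fun ω => (X i ω, Z ω)) (a, z)
      = ∑ x ∈ Fintype.piFinset (fun j => if j ∈ ({i} : Finset (Fin n)) then {v j}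
          else Finset.univ),
        prVal p (fun ω => ((fun j => X j ω), Z ω)) (x, z) := by
    rw [marg_helper p X Z (fun x => x i) a z]
    refine Finset.sum_congr ?_ fun _ _ => rfl
    ext x
    rw [Finset.mem_filter, hpf]
    simp only [Finset.mem_univ, true_and, Finset.mem_singleton]
    constructor
    · intro h j hj; subst hj; exact h.trans hv2.symm
    · intro h; exact (h i rfl).trans hv2
  have hW : prVal p (fun ω => ((fun j : Fin i.1 => X (Fin.castLE i.isLt.le j) ω), Z ω)) (w, z)
      = ∑ x ∈ Fintype.piFinset (fun j => if j ∈ S2 then {v j} else Finset.univ),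
        prVal p (fun ω => ((fun j => X j ω), Z ω)) (x, z) := by
    rw [marg_helper p X Z (fun x => (fun j : Fin i.1 => x (Fin.castLE i.isLt.le j))) w z]
    refine Finset.sum_congr ?_ fun _ _ => rfl
    ext x
    rw [Finset.mem_filter, hpf]
    simp only [Finset.mem_univ, true_and]
    exact key2 x
  have hAW : prVal p (fun ω => (X i ω, (fun j : Fin i.1 => X (Fin.castLE i.isLt.le j) ω), Z ω))
        (a, w, z)
      = ∑ x ∈ Fintype.piFinset (fun j => if j ∈ insert i S2 then {v j} else Finset.univ),
        prVal p (fun ω => ((fun j => X j ω), Z ω)) (x, z) := by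
    have e3 : prVal p (fun ω => (X i ω, (fun j : Fin i.1 => X (Fin.castLE i.isLt.le j) ω), Z ω))
          (a, w, z)
        = prVal p (fun ω => ((X i ω, (fun j : Fin i.1 => X (Fin.castLE i.isLt.le j) ω)), Z ω))
          ((a, w), z) :=
      my_prVal_inj p
        (g := fun y : (α i × (∀ j : Fin i.1, α (Fin.castLE i.isLt.le j))) × γ =>
          (y.1.1, y.1.2, y.2))
        (by rintro ⟨⟨a1, w1⟩, z1⟩ ⟨⟨a2, w2⟩, z2⟩ h; simp_all [Prod.ext_iff])
        (fun ω => ((X i ω, fun j : Fin i.1 => X (Fin.castLE i.isLt.le j) ω), Z ω)) ((a, w), z)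
    rw [e3]
    rw [marg_helper p X Z
      (fun x => (x i, fun j : Fin i.1 => x (Fin.castLE i.isLt.le j))) (a, w) z]
    refine Finset.sum_congr ?_ fun _ _ => rfl
    ext x
    rw [Finset.mem_filter, hpf]
    simp only [Finset.mem_univ, true_and, Prod.mk.injEq, Finset.forall_mem_insert]
    rw [key2 x]
    constructor
    · rintro ⟨h1, h2⟩; exact ⟨h1.trans hv2.symm, h2⟩
    · rintro ⟨h1, h2⟩; exact ⟨h1.trans hv2, h2⟩
  rw [hA, hW, hAW]
  by_cases hq : prVal p Z z = 0
  · have hPz : ∀ x : ∀ j, α j, prVal p (fun ω => ((fun j => X j ω), Z ω)) (x, z) = 0 := by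
      have htot : ∑ x : ∀ j, α j, prVal p (fun ω => ((fun j => X j ω), Z ω)) (x, z)
          = prVal p Z z := by
        rw [my_prVal_fst p Z (fun ω => (fun j => X j ω)) z]
        refine Finset.sum_congr rfl fun x _ => ?_
        exact (my_prVal_inj p (g := fun y : ((∀ j, α j) × γ) => (y.2, y.1))
          (by rintro ⟨x1, z1⟩ ⟨x2, z2⟩ h; simp_all [Prod.ext_iff])
          (fun ω => ((fun j => X j ω), Z ω)) (x, z)).symm
      intro x
      have h0 : ∑ x : ∀ j, α j, prVal p (fun ω => ((fun j => X j ω), Z ω)) (x, z) = 0 :=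
        htot.trans hq
      exact (Finset.sum_eq_zero_iff_of_nonneg
        (fun x _ => my_prVal_nonneg p hp _ _)).mp h0 x (Finset.mem_univ x)
    rw [Finset.sum_eq_zero (fun x _ => hPz x), Finset.sum_eq_zero (fun x _ => hPz x),
      Finset.sum_eq_zero (fun x _ => hPz x)]
    ring
  · have h1 := my_M p X Z z (fun x => hci x z) {i} v
    have h2 := my_M p X Z z (fun x => hci x z) S2 v
    have h3 := my_M p X Z z (fun x => hci x z) (insert i S2) v
    rw [Finset.prod_singleton, Finset.card_singleton, hv2] at h1
    rw [Finset.prod_insert hiS2, Finset.card_insert_of_notMem hiS2, hv2, hcard] at h3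
    rw [hcard] at h2
    have hk : i.1 + 1 ≤ n := i.isLt
    apply mul_right_cancel₀ (pow_ne_zero (n - 1) hq)
    calc (∑ x ∈ Fintype.piFinset (fun j => if j ∈ ({i} : Finset (Fin n)) then {v j}
            else Finset.univ), prVal p (fun ω => ((fun j => X j ω), Z ω)) (x, z))
          * (∑ x ∈ Fintype.piFinset (fun j => if j ∈ S2 then {v j} else Finset.univ),
            prVal p (fun ω => ((fun j => X j ω), Z ω)) (x, z)) * prVal p Z z ^ (n - 1)
        = (∑ x ∈ Fintype.piFinset (fun j => if j ∈ ({i} : Finset (Fin n)) then {v j}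
            else Finset.univ), prVal p (fun ω => ((fun j => X j ω), Z ω)) (x, z))
          * ((∑ x ∈ Fintype.piFinset (fun j => if j ∈ S2 then {v j} else Finset.univ),
            prVal p (fun ω => ((fun j => X j ω), Z ω)) (x, z)) * prVal p Z z ^ (n - 1)) := by
          ring
      _ = (∑ x ∈ Fintype.piFinset (fun j => if j ∈ ({i} : Finset (Fin n)) then {v j}
            else Finset.univ), prVal p (fun ω => ((fun j => X j ω), Z ω)) (x, z))
          * ((∏ j ∈ S2, prVal p (fun ω => (X j ω, Z ω)) (v j, z))
            * prVal p Z z ^ (n - i.1)) := by rw [h2]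
      _ = ((∑ x ∈ Fintype.piFinset (fun j => if j ∈ ({i} : Finset (Fin n)) then {v j}
            else Finset.univ), prVal p (fun ω => ((fun j => X j ω), Z ω)) (x, z))
          * prVal p Z z ^ (n - 1))
          * ((∏ j ∈ S2, prVal p (fun ω => (X j ω, Z ω)) (v j, z))
            * prVal p Z z ^ (n - i.1)) / prVal p Z z ^ (n - 1) := by
          rw [eq_div_iff (pow_ne_zero _ hq)]; ring
      _ = (prVal p (fun ω => (X i ω, Z ω)) (a, z) * prVal p Z z ^ (n - 1))
          * ((∏ j ∈ S2, prVal p (fun ω => (X j ω, Z ω)) (v j, z))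
            * prVal p Z z ^ (n - i.1)) / prVal p Z z ^ (n - 1) := by rw [h1]
      _ = (prVal p (fun ω => (X i ω, Z ω)) (a, z)
            * (∏ j ∈ S2, prVal p (fun ω => (X j ω, Z ω)) (v j, z))
            * prVal p Z z ^ (n - (i.1 + 1)) * prVal p Z z) * prVal p Z z ^ (n - 1)
          / prVal p Z z ^ (n - 1) := by
          rw [show n - i.1 = (n - (i.1 + 1)) + 1 from by omega, pow_succ]
          ring
      _ = prVal p (fun ω => (X i ω, Z ω)) (a, z)
            * (∏ j ∈ S2, prVal p (fun ω => (X j ω, Z ω)) (v j, z))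
            * prVal p Z z ^ (n - (i.1 + 1)) * prVal p Z z := by
          rw [mul_div_assoc, div_self (pow_ne_zero _ hq), mul_one]
      _ = ((∑ x ∈ Fintype.piFinset (fun j => if j ∈ insert i S2 then {v j} else Finset.univ),
            prVal p (fun ω => ((fun j => X j ω), Z ω)) (x, z)) * prVal p Z z ^ (n - 1))
            * prVal p Z z := by rw [h3]
      _ = (∑ x ∈ Fintype.piFinset (fun j => if j ∈ insert i S2 then {v j} else Finset.univ),
            prVal p (fun ω => ((fun j => X j ω), Z ω)) (x, z)) * prVal p Z z
            * prVal p Z z ^ (n - 1) := by ring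

end key

/-- If X₁,…,Xₙ are conditionally independent given Z, then
I(Xᵢ; Y | Z) ≤ I(Xᵢ; Y | (Z, X₁,…,Xᵢ₋₁)) for every i, and consequently
Σᵢ I(Xᵢ; Y | Z) ≤ I((X₁,…,Xₙ); Y | Z). -/
theorem stmt7 {Ω β γ : Type*} {n : ℕ} {α : Fin n → Type*}
    [Fintype Ω] [Fintype β] [DecidableEq β] [Fintype γ] [DecidableEq γ]
    [∀ i, Fintype (α i)] [∀ i, DecidableEq (α i)]
    (p : Ω → ℝ) (hp : ∀ ω, 0 ≤ p ω) (hsum : ∑ ω, p ω = 1)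
    (X : ∀ i : Fin n, Ω → α i) (Y : Ω → β) (Z : Ω → γ)
    (hci : ∀ (x : ∀ i, α i) (z : γ),
      prVal p (fun ω => ((fun i => X i ω), Z ω)) (x, z) * (prVal p Z z) ^ (n - 1)
        = ∏ i, prVal p (fun ω => (X i ω, Z ω)) (x i, z)) :
    (∀ i : Fin n, condMutualInfo p (X i) Y Z
        ≤ condMutualInfo p (X i) Y
            (fun ω => (Z ω, fun j : Fin i.1 => X (Fin.castLE i.isLt.le j) ω))) ∧
      ∑ i, condMutualInfo p (X i) Y Z
        ≤ condMutualInfo p (fun ω i => X i ω) Y Z := by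
  classical
  have hΩ : Nonempty Ω := by
    by_contra h
    rw [not_nonempty_iff] at h
    rw [Finset.univ_eq_empty, Finset.sum_empty] at hsum
    norm_num at hsum
  have hne : ∀ j, Nonempty (α j) := fun j => ⟨X j (Classical.arbitrary Ω)⟩
  -- PART 1
  have E1 : ∀ i : Fin n,
      entropy p (fun ω => (X i ω, (fun j : Fin i.1 => X (Fin.castLE i.isLt.le j) ω), Z ω))
        + entropy p Z
      = entropy p (fun ω => (X i ω, Z ω))
        + entropy p (fun ω => ((fun j : Fin i.1 => X (Fin.castLE i.isLt.le j) ω), Z ω)) :=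
    fun i => my_ci p (X i) (fun ω => fun j : Fin i.1 => X (Fin.castLE i.isLt.le j) ω) Z hp
      (fun a w z => my_key p X Z hp hne hci i a w z)
  have E2 : ∀ i : Fin n,
      entropy p (fun ω => (X i ω, (fun j : Fin i.1 => X (Fin.castLE i.isLt.le j) ω), (Y ω, Z ω)))
        + entropy p (fun ω => (Y ω, Z ω))
      ≤ entropy p (fun ω => (X i ω, (Y ω, Z ω)))
        + entropy p (fun ω => ((fun j : Fin i.1 => X (Fin.castLE i.isLt.le j) ω), (Y ω, Z ω))) :=
    fun i => my_submod p (X i) (fun ω => fun j : Fin i.1 => X (Fin.castLE i.isLt.le j) ω)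
      (fun ω => (Y ω, Z ω)) hp
  have R1 : ∀ i : Fin n,
      entropy p (fun ω => (X i ω, (Z ω, fun j : Fin i.1 => X (Fin.castLE i.isLt.le j) ω)))
      = entropy p (fun ω => (X i ω, (fun j : Fin i.1 => X (Fin.castLE i.isLt.le j) ω), Z ω)) :=
    fun i => my_entropy_inj p
      (g := fun y : α i × (∀ j : Fin i.1, α (Fin.castLE i.isLt.le j)) × γ =>
        (y.1, y.2.2, y.2.1))
      (by rintro ⟨a1, w1, z1⟩ ⟨a2, w2, z2⟩ h; simp_all [Prod.ext_iff])
      (fun ω => (X i ω, (fun j : Fin i.1 => X (Fin.castLE i.isLt.le j) ω), Z ω))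
  have R2 : ∀ i : Fin n,
      entropy p (fun ω => (Z ω, fun j : Fin i.1 => X (Fin.castLE i.isLt.le j) ω))
      = entropy p (fun ω => ((fun j : Fin i.1 => X (Fin.castLE i.isLt.le j) ω), Z ω)) :=
    fun i => my_entropy_inj p
      (g := fun y : (∀ j : Fin i.1, α (Fin.castLE i.isLt.le j)) × γ => (y.2, y.1))
      (by rintro ⟨w1, z1⟩ ⟨w2, z2⟩ h; simp_all [Prod.ext_iff])
      (fun ω => ((fun j : Fin i.1 => X (Fin.castLE i.isLt.le j) ω), Z ω))
  have R3 : ∀ i : Fin n,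
      entropy p (fun ω => (X i ω, (Y ω, (Z ω, fun j : Fin i.1 => X (Fin.castLE i.isLt.le j) ω))))
      = entropy p
          (fun ω => (X i ω, (fun j : Fin i.1 => X (Fin.castLE i.isLt.le j) ω), (Y ω, Z ω))) :=
    fun i => my_entropy_inj p
      (g := fun y : α i × (∀ j : Fin i.1, α (Fin.castLE i.isLt.le j)) × (β × γ) =>
        (y.1, y.2.2.1, y.2.2.2, y.2.1))
      (by rintro ⟨a1, w1, y1, z1⟩ ⟨a2, w2, y2, z2⟩ h; simp_all [Prod.ext_iff])
      (fun ω => (X i ω, (fun j : Fin i.1 => X (Fin.castLE i.isLt.le j) ω), (Y ω, Z ω)))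
  have R4 : ∀ i : Fin n,
      entropy p (fun ω => (Y ω, (Z ω, fun j : Fin i.1 => X (Fin.castLE i.isLt.le j) ω)))
      = entropy p (fun ω => ((fun j : Fin i.1 => X (Fin.castLE i.isLt.le j) ω), (Y ω, Z ω))) :=
    fun i => my_entropy_inj p
      (g := fun y : (∀ j : Fin i.1, α (Fin.castLE i.isLt.le j)) × (β × γ) =>
        (y.2.1, y.2.2, y.1))
      (by rintro ⟨w1, y1, z1⟩ ⟨w2, y2, z2⟩ h; simp_all [Prod.ext_iff])
      (fun ω => ((fun j : Fin i.1 => X (Fin.castLE i.isLt.le j) ω), (Y ω, Z ω)))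
  have part1 : ∀ i : Fin n, condMutualInfo p (X i) Y Z
      ≤ condMutualInfo p (X i) Y
          (fun ω => (Z ω, fun j : Fin i.1 => X (Fin.castLE i.isLt.le j) ω)) := by
    intro i
    simp only [condMutualInfo, condEntropy]
    linarith [E1 i, E2 i, R1 i, R2 i, R3 i, R4 i]
  refine ⟨part1, ?_⟩
  -- PART 2
  obtain ⟨g, hgdef⟩ : ∃ g : ℕ → ℝ, ∀ (k : ℕ) (h : k ≤ n),
      g k = entropy p (fun ω => (Z ω, fun j : Fin k => X (Fin.castLE h j) ω)) :=
    ⟨fun k => if h : k ≤ n then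
        entropy p (fun ω => (Z ω, fun j : Fin k => X (Fin.castLE h j) ω)) else 0,
      fun k h => dif_pos h⟩
  obtain ⟨g', hg'def⟩ : ∃ g' : ℕ → ℝ, ∀ (k : ℕ) (h : k ≤ n),
      g' k = entropy p (fun ω => (Y ω, Z ω, fun j : Fin k => X (Fin.castLE h j) ω)) :=
    ⟨fun k => if h : k ≤ n then
        entropy p (fun ω => (Y ω, Z ω, fun j : Fin k => X (Fin.castLE h j) ω)) else 0,
      fun k h => dif_pos h⟩
  have c2 : ∀ i : Fin n,
      entropy p (fun ω => (Z ω, fun j : Fin i.1 => X (Fin.castLE i.isLt.le j) ω)) = g i.1 :=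
    fun i => (hgdef i.1 i.isLt.le).symm
  have c4 : ∀ i : Fin n,
      entropy p (fun ω => (Y ω, (Z ω, fun j : Fin i.1 => X (Fin.castLE i.isLt.le j) ω)))
        = g' i.1 :=
    fun i => (hg'def i.1 i.isLt.le).symm
  have c1 : ∀ i : Fin n,
      entropy p (fun ω => (X i ω, (Z ω, fun j : Fin i.1 => X (Fin.castLE i.isLt.le j) ω)))
        = g (i.1 + 1) := by
    intro i
    rw [hgdef (i.1 + 1) i.isLt]
    have hfun : (fun ω => (Z ω, fun j : Fin (i.1 + 1) => X (Fin.castLE i.isLt j) ω))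
        = (fun ω => (fun y : α i × (γ × (∀ j : Fin i.1, α (Fin.castLE i.isLt.le j))) =>
            (y.2.1, (Fin.snoc y.2.2 y.1 : ∀ j : Fin (i.1 + 1), α (Fin.castLE i.isLt j))))
          ((X i ω, (Z ω, fun j : Fin i.1 => X (Fin.castLE i.isLt.le j) ω)))) := by
      funext ω
      rw [Prod.mk.injEq]
      refine ⟨rfl, ?_⟩
      funext j
      refine Fin.lastCases ?_ ?_ j
      · rw [Fin.snoc_last]
        rfl
      · intro j'
        rw [Fin.snoc_castSucc]
        rfl
    rw [hfun]
    exact (my_entropy_inj p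
      (g := fun y : α i × (γ × (∀ j : Fin i.1, α (Fin.castLE i.isLt.le j))) =>
        (y.2.1, (Fin.snoc y.2.2 y.1 : ∀ j : Fin (i.1 + 1), α (Fin.castLE i.isLt j))))
      (by
        rintro ⟨a1, z1, w1⟩ ⟨a2, z2, w2⟩ h
        simp only [Prod.mk.injEq] at h
        obtain ⟨hz, hsn⟩ := h
        have ha : a1 = a2 := by
          have := congrArg (fun f => f (Fin.last i.1)) hsn
          simpa [Fin.snoc_last] using this
        have hw : w1 = w2 := by
          have := congrArg Fin.init hsn
          simpa [Fin.init_snoc] using this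
        subst hz; subst ha; subst hw; rfl)
      (fun ω => (X i ω, (Z ω, fun j : Fin i.1 => X (Fin.castLE i.isLt.le j) ω)))).symm
  have c3 : ∀ i : Fin n,
      entropy p (fun ω => (X i ω, (Y ω, (Z ω,
          fun j : Fin i.1 => X (Fin.castLE i.isLt.le j) ω))))
        = g' (i.1 + 1) := by
    intro i
    rw [hg'def (i.1 + 1) i.isLt]
    have hfun : (fun ω => (Y ω, Z ω, fun j : Fin (i.1 + 1) => X (Fin.castLE i.isLt j) ω))
        = (fun ω => (fun y : α i × (β × (γ × (∀ j : Fin i.1, α (Fin.castLE i.isLt.le j)))) =>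
            (y.2.1, y.2.2.1, (Fin.snoc y.2.2.2 y.1 : ∀ j : Fin (i.1 + 1), α (Fin.castLE i.isLt j))))
          ((X i ω, (Y ω, (Z ω, fun j : Fin i.1 => X (Fin.castLE i.isLt.le j) ω))))) := by
      funext ω
      rw [Prod.mk.injEq]
      refine ⟨rfl, ?_⟩
      rw [Prod.mk.injEq]
      refine ⟨rfl, ?_⟩
      funext j
      refine Fin.lastCases ?_ ?_ j
      · rw [Fin.snoc_last]
        rfl
      · intro j'
        rw [Fin.snoc_castSucc]
        rfl
    rw [hfun]
    exact (my_entropy_inj p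
      (g := fun y : α i × (β × (γ × (∀ j : Fin i.1, α (Fin.castLE i.isLt.le j)))) =>
        (y.2.1, y.2.2.1, (Fin.snoc y.2.2.2 y.1 : ∀ j : Fin (i.1 + 1), α (Fin.castLE i.isLt j))))
      (by
        rintro ⟨a1, y1, z1, w1⟩ ⟨a2, y2, z2, w2⟩ h
        simp only [Prod.mk.injEq] at h
        obtain ⟨hy, hz, hsn⟩ := h
        have ha : a1 = a2 := by
          have := congrArg (fun f => f (Fin.last i.1)) hsn
          simpa [Fin.snoc_last] using this
        have hw : w1 = w2 := by
          have := congrArg Fin.init hsn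
          simpa [Fin.init_snoc] using this
        subst hy; subst hz; subst ha; subst hw; rfl)
      (fun ω => (X i ω, (Y ω, (Z ω,
        fun j : Fin i.1 => X (Fin.castLE i.isLt.le j) ω))))).symm
  have tele : ∀ f : ℕ → ℝ, ∑ i : Fin n, (f (i.1 + 1) - f i.1) = f n - f 0 := fun f => by
    rw [Fin.sum_univ_eq_sum_range (fun k => f (k + 1) - f k), Finset.sum_range_sub]
  have G1 : g n = entropy p (fun ω => ((fun i => X i ω), Z ω)) := by
    rw [hgdef n le_rfl]
    exact my_entropy_inj p (g := fun y : (∀ i, α i) × γ => (y.2, y.1))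
      (by
        rintro ⟨x1, z1⟩ ⟨x2, z2⟩ h
        have h1 : z1 = z2 := congrArg Prod.fst h
        have h2 : x1 = x2 := congrArg Prod.snd h
        subst h1; subst h2; rfl)
      (fun ω => ((fun i => X i ω), Z ω))
  have G0 : g 0 = entropy p Z := by
    rw [hgdef 0 (Nat.zero_le n)]
    have h00 : (fun ω => (Z ω, fun j : Fin 0 => X (Fin.castLE (Nat.zero_le n) j) ω))
        = (fun ω => (fun z : γ =>
            (z, (fun j : Fin 0 => j.elim0 : ∀ j : Fin 0, α (Fin.castLE (Nat.zero_le n) j))))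
          (Z ω)) := by
      funext ω
      rw [Prod.mk.injEq]
      exact ⟨rfl, funext fun j => j.elim0⟩
    rw [h00]
    exact my_entropy_inj p
      (g := fun z : γ =>
        (z, (fun j : Fin 0 => j.elim0 : ∀ j : Fin 0, α (Fin.castLE (Nat.zero_le n) j))))
      (by intro z1 z2 h; exact congrArg Prod.fst h) Z
  have G1' : g' n = entropy p (fun ω => ((fun i => X i ω), (Y ω, Z ω))) := by
    rw [hg'def n le_rfl]
    exact my_entropy_inj p (g := fun y : (∀ i, α i) × (β × γ) => (y.2.1, y.2.2, y.1))
      (by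
        rintro ⟨x1, y1, z1⟩ ⟨x2, y2, z2⟩ h
        have h1 : y1 = y2 := congrArg Prod.fst h
        have h2 : z1 = z2 := congrArg (fun q => q.2.1) h
        have h3 : x1 = x2 := congrArg (fun q => q.2.2) h
        subst h1; subst h2; subst h3; rfl)
      (fun ω => ((fun i => X i ω), (Y ω, Z ω)))
  have G0' : g' 0 = entropy p (fun ω => (Y ω, Z ω)) := by
    rw [hg'def 0 (Nat.zero_le n)]
    have h00 : (fun ω => (Y ω, Z ω, fun j : Fin 0 => X (Fin.castLE (Nat.zero_le n) j) ω))
        = (fun ω => (fun yz : β × γ =>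
            (yz.1, yz.2, (fun j : Fin 0 => j.elim0 : ∀ j : Fin 0,
              α (Fin.castLE (Nat.zero_le n) j))))
          ((Y ω, Z ω))) := by
      funext ω
      rw [Prod.mk.injEq]
      refine ⟨rfl, ?_⟩
      rw [Prod.mk.injEq]
      exact ⟨rfl, funext fun j => j.elim0⟩
    rw [h00]
    exact my_entropy_inj p
      (g := fun yz : β × γ =>
        (yz.1, yz.2, (fun j : Fin 0 => j.elim0 : ∀ j : Fin 0,
          α (Fin.castLE (Nat.zero_le n) j))))
      (by
        rintro ⟨y1, z1⟩ ⟨y2, z2⟩ h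
        have h1 : y1 = y2 := congrArg Prod.fst h
        have h2 : z1 = z2 := congrArg (fun q => q.2.1) h
        subst h1; subst h2; rfl) (fun ω => (Y ω, Z ω))
  calc ∑ i, condMutualInfo p (X i) Y Z
      ≤ ∑ i : Fin n, condMutualInfo p (X i) Y
          (fun ω => (Z ω, fun j : Fin i.1 => X (Fin.castLE i.isLt.le j) ω)) :=
        Finset.sum_le_sum fun i _ => part1 i
    _ = ∑ i : Fin n, ((g (i.1 + 1) - g' (i.1 + 1)) - (g i.1 - g' i.1)) := by
        refine Finset.sum_congr rfl fun i _ => ?_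
        simp only [condMutualInfo, condEntropy]
        rw [c1 i, c2 i, c3 i, c4 i]
        ring
    _ = (g n - g' n) - (g 0 - g' 0) := tele (fun k => g k - g' k)
    _ = condMutualInfo p (fun ω i => X i ω) Y Z := by
        simp only [condMutualInfo, condEntropy]
        linarith [G1, G0, G1', G0']
end
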